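/- Let w_1, …, w_m be vectors in ℝ^d. Then the number of sign vectors σ ∈ {−1, +1}^m for which there exists ξ ∈ ℝ^d with σ_i · ⟨w_i, ξ⟩ > 0 for every i ∈ [m] is at most Σ_{j=0}^{d} C(m, j). Equivalently, the central hyperplane arrangement with hyperplanes H_i = {ξ : ⟨w_i, ξ⟩ = 0} has at most Σ_{j=0}^{d} C(m, j) chambers. -/
import Mathlib


open Matrix

/-- **Zaslavsky-type chamber bound.** Given vectors `w_1, …, w_m ∈ ℝ^d`, the number of sign
vectors `σ ∈ {−1,+1}^m` realized by some `ξ ∈ ℝ^d` with `σ_i·⟨w_i, ξ⟩ > 0` for all `i` is at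
most `Σ_{j=0}^{d} C(m, j)`.  Equivalently, the central hyperplane arrangement with hyperplanes
`H_i = {ξ : ⟨w_i, ξ⟩ = 0}` has at most `Σ_{j=0}^{d} C(m, j)` chambers. -/
theorem chamber_count_bound {m d : ℕ} (w : Fin m → (Fin d → ℝ)) :
    Set.ncard {σ : Fin m → ℝ |
        (∀ i, σ i = 1 ∨ σ i = -1) ∧ ∃ ξ : Fin d → ℝ, ∀ i, 0 < σ i * (w i ⬝ᵥ ξ)}
      ≤ ∑ j ∈ Finset.range (d + 1), m.choose j := by
  classical
  set S := {σ : Fin m → ℝ |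
      (∀ i, σ i = 1 ∨ σ i = -1) ∧ ∃ ξ : Fin d → ℝ, ∀ i, 0 < σ i * (w i ⬝ᵥ ξ)} with hS
  have hfin : S.Finite := by
    apply Set.Finite.subset (Set.finite_range
      (fun (b : Fin m → Bool) => fun i => if b i then (1 : ℝ) else -1))
    rintro σ ⟨h1, -⟩
    refine ⟨fun i => decide (σ i = 1), funext fun i => ?_⟩
    rcases h1 i with h | h <;> simp [h] <;> norm_num
  set f : (Fin m → ℝ) → Finset (Fin m) := fun σ => Finset.univ.filter (fun i => σ i = 1) with hf
  set 𝒜 : Finset (Finset (Fin m)) := hfin.toFinset.image f with h𝒜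
  have hcard : S.ncard = 𝒜.card := by
    rw [Set.ncard_eq_toFinset_card S hfin]
    rw [h𝒜, Finset.card_image_of_injOn]
    intro σ hσ τ hτ hfστ
    simp only [Finset.mem_coe, Set.Finite.mem_toFinset] at hσ hτ
    funext i
    have hiff : σ i = 1 ↔ τ i = 1 := by
      have := Finset.ext_iff.mp hfστ i
      simpa [hf] using this
    rcases hσ.1 i with h | h <;> rcases hτ.1 i with h' | h' <;> simp_all
  -- VC dimension bound
  have hvc : 𝒜.vcDim ≤ d := by
    apply Finset.sup_le
    intro s hs
    rw [Finset.mem_shatterer] at hs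
    by_contra hlt
    push_neg at hlt
    have hnli : ¬ LinearIndependent ℝ (fun i : s => w i) := by
      intro hli
      have h1 := hli.fintype_card_le_finrank
      rw [Module.finrank_fintype_fun_eq_card] at h1
      simp only [Fintype.card_coe, Fintype.card_fin] at h1
      omega
    rw [Fintype.not_linearIndependent_iff] at hnli
    obtain ⟨g, hg0, i0, hi0⟩ := hnli
    set G : Fin m → ℝ := fun i => if h : i ∈ s then g ⟨i, h⟩ else 0 with hG
    obtain ⟨u, hu, hsu⟩ := hs (t := s.filter (fun i => 0 < G i)) (Finset.filter_subset _ _)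
    rw [h𝒜, Finset.mem_image] at hu
    obtain ⟨σ, hσ, rfl⟩ := hu
    rw [Set.Finite.mem_toFinset] at hσ
    obtain ⟨h1, ξ, hξ⟩ := hσ
    -- for i ∈ s: σ i = 1 ↔ 0 < G i
    have key : ∀ i ∈ s, (σ i = 1 ↔ 0 < G i) := by
      intro i hi
      have := Finset.ext_iff.mp hsu i
      simp [hf, hi] at this
      exact this
    have hterm : ∀ i ∈ s, 0 ≤ G i * (w i ⬝ᵥ ξ) := by
      intro i hi
      rcases lt_trichotomy (G i) 0 with h | h | h
      · have hσi : σ i = -1 := by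
          rcases h1 i with h' | h'
          · exact absurd ((key i hi).mp h') (by linarith)
          · exact h'
        have := hξ i
        rw [hσi] at this
        nlinarith
      · simp [h]
      · have hσi := (key i hi).mpr h
        have := hξ i
        rw [hσi, one_mul] at this
        positivity
    have hpos : 0 < ∑ i ∈ s, G i * (w i ⬝ᵥ ξ) := by
      apply Finset.sum_pos' hterm
      refine ⟨(i0 : Fin m), i0.2, ?_⟩
      have hGi0 : G (i0 : Fin m) = g i0 := by simp [hG, i0.2]
      rcases lt_trichotomy (G (i0 : Fin m)) 0 with h | h | h
      · have hσi : σ (i0 : Fin m) = -1 := by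
          rcases h1 (i0 : Fin m) with h' | h'
          · exact absurd ((key _ i0.2).mp h') (by linarith)
          · exact h'
        have := hξ (i0 : Fin m)
        rw [hσi] at this
        nlinarith
      · rw [hGi0] at h; exact absurd h hi0
      · have hσi := (key _ i0.2).mpr h
        have := hξ (i0 : Fin m)
        rw [hσi, one_mul] at this
        positivity
    have hzero : ∑ i ∈ s, G i * (w i ⬝ᵥ ξ) = 0 := by
      have h1' : ∑ i ∈ s, G i • w i = 0 := by
        rw [← Finset.sum_attach s (fun i => G i • w i)]
        rw [← hg0]
        apply Finset.sum_congr rfl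
        intro i _
        simp [hG, i.2]
      calc ∑ i ∈ s, G i * (w i ⬝ᵥ ξ) = (∑ i ∈ s, G i • w i) ⬝ᵥ ξ := by
            simp only [dotProduct, Finset.sum_apply, Pi.smul_apply, smul_eq_mul,
              Finset.sum_mul, Finset.mul_sum, mul_assoc]
            rw [Finset.sum_comm]
        _ = 0 := by rw [h1']; simp
    linarith
  calc S.ncard = 𝒜.card := hcard
    _ ≤ 𝒜.shatterer.card := Finset.card_le_card_shatterer 𝒜
    _ ≤ ∑ k ∈ Finset.Iic 𝒜.vcDim, (Fintype.card (Fin m)).choose k :=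
        Finset.card_shatterer_le_sum_vcDim
    _ ≤ ∑ j ∈ Finset.range (d + 1), m.choose j := by
        rw [Fintype.card_fin]
        apply Finset.sum_le_sum_of_subset
        intro k hk
        simp only [Finset.mem_Iic, Finset.mem_range] at *
        omega
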